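/- Suppose ‖h‖_{2,P} < ∞ where P ≪ Q, and let τ_n → ∞ with τ_n/n → 0. Then the truncated likelihood ratio estimator h̄_n^{Tru} = (1/n)∑_{i=1}^n h(X̃_i) min(l(X̃_i), τ_n), with X̃_i i.i.d. ∼ Q, is asymptotically unbiased (E[h̄_n^{Tru}] → E_P[h]) and Var(h̄_n^{Tru}) → 0, hence h̄_n^{Tru} → E_P[h] in probability. -/

import Mathlib

/-!
Write `l = dP/dQ` and `Y = h(X̃) · min(l(X̃), τ)` with `X̃ ∼ Q`. Since `|Y| ≤ |h(X̃)| · l(X̃)` and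
`E_Q[|h| l] = E_P[|h|] < ∞`, dominated convergence gives `E[Y] → E_Q[h l] = E_P[h]` as `τ → ∞`.
Since `min(l, τ)² ≤ τ l`, `Var(Y) ≤ E[Y²] ≤ τ E_Q[h² l] = τ ‖h‖²_{2,P}`, so the sample mean of `n`
independent copies has variance at most `τₙ ‖h‖²_{2,P} / n → 0`. Chebyshev's inequality then
turns vanishing bias and variance into convergence in probability.
-/

open MeasureTheory ProbabilityTheory Filter Topology

noncomputable def lr {X : Type*} [MeasurableSpace X] (P Q : Measure X) (x : X) : ℝ :=
  (P.rnDeriv Q x).toReal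

/-- The truncated likelihood-ratio estimator based on `n` samples with truncation
boundary `τ`. -/
noncomputable def truLR {X : Type*} [MeasurableSpace X] {Ω : Type*}
    (P Q : Measure X) (h : X → ℝ) (n : ℕ) (Xs : Fin n → Ω → X) (τ : ℝ) (ω : Ω) : ℝ :=
  (1 / (n : ℝ)) * ∑ i, h (Xs i ω) * min (lr P Q (Xs i ω)) τ

section SampleMean

variable {X Ω : Type*} [MeasurableSpace X] [MeasurableSpace Ω] {μ : Measure Ω} {Q : Measure X}
  {n : ℕ} {Y : Fin n → Ω → X} {f : X → ℝ}

lemma integral_sampleMean (hn : n ≠ 0) (hf : Integrable f Q) (hY : ∀ i, Measurable (Y i))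
    (hYQ : ∀ i, μ.map (Y i) = Q) :
    ∫ ω, (1 / (n : ℝ)) * ∑ i, f (Y i ω) ∂μ = ∫ x, f x ∂Q := by
  have hcomp : ∀ i, ∫ ω, f (Y i ω) ∂μ = ∫ x, f x ∂Q := fun i => by
    rw [← hYQ i, integral_map (hY i).aemeasurable ((hYQ i).symm ▸ hf.aestronglyMeasurable)]
  have hint : ∀ i, Integrable (fun ω => f (Y i ω)) μ := fun i =>
    (show Integrable f (μ.map (Y i)) by rwa [hYQ i]).comp_aemeasurable (hY i).aemeasurable
  rw [integral_const_mul, integral_finsetSum _ fun i _ => hint i]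
  simp only [hcomp, Finset.sum_const, Finset.card_univ, Fintype.card_fin, nsmul_eq_mul]
  field_simp

lemma memLp_two_sampleMean (hf : MemLp f 2 Q) (hY : ∀ i, Measurable (Y i))
    (hYQ : ∀ i, μ.map (Y i) = Q) :
    MemLp (fun ω => (1 / (n : ℝ)) * ∑ i, f (Y i ω)) 2 μ := by
  have hcomp : ∀ i, MemLp (f ∘ Y i) 2 μ := fun i =>
    MemLp.comp_of_map (by rwa [hYQ i]) (hY i).aemeasurable
  simpa [Finset.sum_apply] using
    (memLp_finsetSum' Finset.univ fun i _ => hcomp i).const_mul (1 / (n : ℝ))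

lemma variance_sampleMean (hf : Measurable f) (hf2 : MemLp f 2 Q) (hY : ∀ i, Measurable (Y i))
    (hYQ : ∀ i, μ.map (Y i) = Q) (hind : iIndepFun Y μ) :
    variance (fun ω => (1 / (n : ℝ)) * ∑ i, f (Y i ω)) μ = variance f Q / n := by
  have hvar : ∀ i, variance (f ∘ Y i) μ = variance f Q := fun i => by
    rw [← variance_map ((hYQ i).symm ▸ hf.aemeasurable) (hY i).aemeasurable, hYQ i]
  have hsum : variance (∑ i, f ∘ Y i) μ = ∑ i, variance (f ∘ Y i) μ :=
    IndepFun.variance_sum (fun i _ => MemLp.comp_of_map (by rwa [hYQ i]) (hY i).aemeasurable)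
      fun i _ j _ hij => (hind.indepFun hij).comp hf hf
  have hfun : (fun ω => ∑ i, f (Y i ω)) = ∑ i, f ∘ Y i := by
    ext ω; simp [Finset.sum_apply]
  rw [variance_const_mul, hfun, hsum]
  simp only [hvar, Finset.sum_const, Finset.card_univ, Fintype.card_fin, nsmul_eq_mul]
  rcases eq_or_ne (n : ℝ) 0 with hn | hn
  · simp [hn]
  · field_simp

end SampleMean

lemma tendsto_measure_abs_sub_ge_of_tendsto_variance {Ω : Type*} [MeasurableSpace Ω]
    {μ : Measure Ω} [IsFiniteMeasure μ] {S : ℕ → Ω → ℝ} {m : ℝ}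
    (hS : ∀ᶠ n in atTop, MemLp (S n) 2 μ)
    (hmean : Tendsto (fun n => ∫ ω, S n ω ∂μ) atTop (𝓝 m))
    (hvar : Tendsto (fun n => variance (S n) μ) atTop (𝓝 0)) {ε : ℝ} (hε : 0 < ε) :
    Tendsto (fun n => μ {ω | ε ≤ |S n ω - m|}) atTop (𝓝 0) := by
  have hε2 : 0 < ε / 2 := half_pos hε
  have hbound : ∀ᶠ n in atTop,
      μ {ω | ε ≤ |S n ω - m|} ≤ ENNReal.ofReal (variance (S n) μ / (ε / 2) ^ 2) := by
    filter_upwards [hS, Metric.tendsto_nhds.1 hmean (ε / 2) hε2] with n hSn hclose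
    -- a deviation ε from `m` is a deviation at least ε/2 from the mean
    have hsub : {ω | ε ≤ |S n ω - m|} ⊆ {ω | ε / 2 ≤ |S n ω - ∫ ω', S n ω' ∂μ|} := by
      intro ω hω
      rw [Real.dist_eq] at hclose
      have := abs_sub_le (S n ω) (∫ ω', S n ω' ∂μ) m
      simp only [Set.mem_ofPred_eq] at hω ⊢
      linarith
    exact (measure_mono hsub).trans (meas_ge_le_variance_div_sq hSn hε2)
  have hlim : Tendsto (fun n => ENNReal.ofReal (variance (S n) μ / (ε / 2) ^ 2)) atTop (𝓝 0) := by
    simpa using ENNReal.tendsto_ofReal (hvar.div_const ((ε / 2) ^ 2))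
  exact tendsto_of_tendsto_of_tendsto_of_le_of_le' tendsto_const_nhds hlim
    (Eventually.of_forall fun _ => zero_le) hbound

noncomputable def truncatedLRTerm {X : Type*} [MeasurableSpace X] (P Q : Measure X)
    (h : X → ℝ) (τ : ℝ) (x : X) : ℝ :=
  h x * min (lr P Q x) τ

lemma truLR_eq_sampleMean {X Ω : Type*} [MeasurableSpace X] (P Q : Measure X) (h : X → ℝ)
    (n : ℕ) (Xs : Fin n → Ω → X) (τ : ℝ) :
    truLR P Q h n Xs τ = fun ω => (1 / (n : ℝ)) * ∑ i, truncatedLRTerm P Q h τ (Xs i ω) :=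
  rfl

section TruncatedLRTerm

variable {X : Type*} [MeasurableSpace X] {P Q : Measure X} {h : X → ℝ} {τ : ℝ}

lemma lr_nonneg (x : X) : 0 ≤ lr P Q x := ENNReal.toReal_nonneg

lemma measurable_lr : Measurable (lr P Q) := (Measure.measurable_rnDeriv P Q).ennreal_toReal

lemma measurable_truncatedLRTerm (hh : Measurable h) : Measurable (truncatedLRTerm P Q h τ) :=
  hh.mul (measurable_lr.min measurable_const)

lemma abs_truncatedLRTerm_le (hτ : 0 ≤ τ) (x : X) :
    |truncatedLRTerm P Q h τ x| ≤ lr P Q x * |h x| := by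
  rw [truncatedLRTerm, abs_mul, abs_of_nonneg (le_min (lr_nonneg x) hτ), mul_comm]
  exact mul_le_mul_of_nonneg_right (min_le_left _ _) (abs_nonneg _)

lemma truncatedLRTerm_sq_le (hτ : 0 ≤ τ) (x : X) :
    truncatedLRTerm P Q h τ x ^ 2 ≤ τ * (lr P Q x * h x ^ 2) := by
  have hmin : min (lr P Q x) τ ^ 2 ≤ τ * lr P Q x := by
    rw [sq, mul_comm τ]
    exact mul_le_mul (min_le_left _ _) (min_le_right _ _) (le_min (lr_nonneg x) hτ) (lr_nonneg x)
  calc truncatedLRTerm P Q h τ x ^ 2 = h x ^ 2 * min (lr P Q x) τ ^ 2 := mul_pow _ _ _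
    _ ≤ h x ^ 2 * (τ * lr P Q x) := mul_le_mul_of_nonneg_left hmin (sq_nonneg _)
    _ = τ * (lr P Q x * h x ^ 2) := by ring

variable [SigmaFinite P] [P.HaveLebesgueDecomposition Q]

lemma integrable_truncatedLRTerm (hPQ : P ≪ Q) (hh : Measurable h) (hint : Integrable h P)
    (hτ : 0 ≤ τ) : Integrable (truncatedLRTerm P Q h τ) Q :=
  ((integrable_rnDeriv_smul_iff hPQ).2 hint.abs).mono'
    (measurable_truncatedLRTerm hh).aestronglyMeasurable
    (Eventually.of_forall fun x => abs_truncatedLRTerm_le hτ x)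

lemma integrable_truncatedLRTerm_sq (hPQ : P ≪ Q) (hh : Measurable h)
    (hL2 : Integrable (fun x => h x ^ 2) P) (hτ : 0 ≤ τ) :
    Integrable (fun x => truncatedLRTerm P Q h τ x ^ 2) Q :=
  (((integrable_rnDeriv_smul_iff hPQ).2 hL2).const_mul τ).mono'
    ((measurable_truncatedLRTerm hh).pow_const 2).aestronglyMeasurable
    (Eventually.of_forall fun x => by
      rw [Real.norm_of_nonneg (sq_nonneg _)]
      exact truncatedLRTerm_sq_le hτ x)

lemma integral_truncatedLRTerm_sq_le (hPQ : P ≪ Q) (hh : Measurable h)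
    (hL2 : Integrable (fun x => h x ^ 2) P) (hτ : 0 ≤ τ) :
    ∫ x, truncatedLRTerm P Q h τ x ^ 2 ∂Q ≤ τ * ∫ x, h x ^ 2 ∂P := by
  rw [← integral_rnDeriv_smul hPQ, ← integral_const_mul]
  exact integral_mono (integrable_truncatedLRTerm_sq hPQ hh hL2 hτ)
    (((integrable_rnDeriv_smul_iff hPQ).2 hL2).const_mul τ) fun x => truncatedLRTerm_sq_le hτ x

lemma memLp_two_truncatedLRTerm (hPQ : P ≪ Q) (hh : Measurable h)
    (hL2 : Integrable (fun x => h x ^ 2) P) (hτ : 0 ≤ τ) :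
    MemLp (truncatedLRTerm P Q h τ) 2 Q :=
  (memLp_two_iff_integrable_sq (measurable_truncatedLRTerm hh).aestronglyMeasurable).2
    (integrable_truncatedLRTerm_sq hPQ hh hL2 hτ)

lemma variance_truncatedLRTerm_le [IsProbabilityMeasure Q] (hPQ : P ≪ Q) (hh : Measurable h)
    (hL2 : Integrable (fun x => h x ^ 2) P) (hτ : 0 ≤ τ) :
    variance (truncatedLRTerm P Q h τ) Q ≤ τ * ∫ x, h x ^ 2 ∂P :=
  (variance_le_expectation_sq (measurable_truncatedLRTerm hh).aestronglyMeasurable).trans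
    (integral_truncatedLRTerm_sq_le hPQ hh hL2 hτ)

/-- Dominated convergence, with dominating function `l · |h|`: the truncation is eventually
inactive at every point. -/
lemma tendsto_integral_truncatedLRTerm (hPQ : P ≪ Q) (hh : Measurable h) (hint : Integrable h P)
    {τ : ℕ → ℝ} (hτ : Tendsto τ atTop atTop) :
    Tendsto (fun n => ∫ x, truncatedLRTerm P Q h (τ n) x ∂Q) atTop (𝓝 (∫ x, h x ∂P)) := by
  rw [← integral_rnDeriv_smul hPQ]
  refine tendsto_integral_filter_of_dominated_convergence (fun x => lr P Q x * |h x|)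
    (Eventually.of_forall fun n => (measurable_truncatedLRTerm hh).aestronglyMeasurable)
    ((hτ.eventually_ge_atTop 0).mono fun n hn =>
      Eventually.of_forall fun x => abs_truncatedLRTerm_le hn x)
    ((integrable_rnDeriv_smul_iff hPQ).2 hint.abs) (Eventually.of_forall fun x => ?_)
  refine tendsto_const_nhds.congr' ((hτ.eventually_ge_atTop (lr P Q x)).mono fun n hn => ?_)
  change _ = h x * min (lr P Q x) (τ n)
  rw [min_eq_left hn, lr, smul_eq_mul, mul_comm]

end TruncatedLRTerm

/-- Weak consistency of the truncated likelihood-ratio estimator: if `‖h‖_{2,P} < ∞`,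
`τₙ → ∞` and `τₙ/n → 0`, then the estimator is asymptotically unbiased, its variance
tends to `0`, and it converges in probability to `E_P[h]`. -/
theorem truncated_lr_weakly_consistent
    {X : Type*} [MeasurableSpace X] {Ω : Type*} [MeasurableSpace Ω]
    (P Q : Measure X) [IsProbabilityMeasure P] [IsProbabilityMeasure Q]
    (hPQ : P ≪ Q) (h : X → ℝ) (hmeas : Measurable h)
    (hL2 : Integrable (fun x => (h x) ^ 2) P)
    (τ : ℕ → ℝ) (hτ : Tendsto τ atTop atTop)
    (hτn : Tendsto (fun n => τ n / (n : ℝ)) atTop (nhds 0))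
    (μ : Measure Ω) [IsProbabilityMeasure μ]
    (Xs : (n : ℕ) → Fin n → Ω → X)
    (hXmeas : ∀ n i, Measurable (Xs n i))
    (hid : ∀ n i, Measure.map (Xs n i) μ = Q)
    (hindep : ∀ n, iIndepFun (Xs n) μ) :
    Tendsto (fun n => ∫ ω, truLR P Q h n (Xs n) (τ n) ω ∂μ) atTop (nhds (∫ x, h x ∂P)) ∧
    Tendsto (fun n => variance (truLR P Q h n (Xs n) (τ n)) μ) atTop (nhds 0) ∧
    (∀ ε : ℝ, 0 < ε →
      Tendsto (fun n => μ {ω | ε ≤ |truLR P Q h n (Xs n) (τ n) ω - ∫ x, h x ∂P|})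
        atTop (nhds 0)) := by
  have hint : Integrable h P :=
    ((memLp_two_iff_integrable_sq hmeas.aestronglyMeasurable).2 hL2).integrable one_le_two
  have hτ0 : ∀ᶠ n in atTop, 0 ≤ τ n := hτ.eventually_ge_atTop 0
  have hmemLp : ∀ᶠ n in atTop, MemLp (truncatedLRTerm P Q h (τ n)) 2 Q :=
    hτ0.mono fun n hn => memLp_two_truncatedLRTerm hPQ hmeas hL2 hn
  have hmean : Tendsto (fun n => ∫ ω, truLR P Q h n (Xs n) (τ n) ω ∂μ) atTop
      (𝓝 (∫ x, h x ∂P)) := by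
    refine (tendsto_integral_truncatedLRTerm hPQ hmeas hint hτ).congr' ?_
    filter_upwards [hτ0, eventually_ne_atTop 0] with n hn hn0
    exact (integral_sampleMean hn0 (integrable_truncatedLRTerm hPQ hmeas hint hn) (hXmeas n)
      (hid n)).symm
  have hvar : Tendsto (fun n => variance (truLR P Q h n (Xs n) (τ n)) μ) atTop (𝓝 0) := by
    refine squeeze_zero' (Eventually.of_forall fun n => variance_nonneg _ _) ?_
      (by simpa using hτn.mul_const (∫ x, h x ^ 2 ∂P))
    filter_upwards [hmemLp, hτ0] with n hn hτn0
    rw [truLR_eq_sampleMean, variance_sampleMean (measurable_truncatedLRTerm hmeas) hn (hXmeas n)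
      (hid n) (hindep n), div_mul_eq_mul_div]
    gcongr
    exact variance_truncatedLRTerm_le hPQ hmeas hL2 hτn0
  refine ⟨hmean, hvar, fun ε hε => tendsto_measure_abs_sub_ge_of_tendsto_variance ?_ hmean hvar hε⟩
  filter_upwards [hmemLp] with n hn
  exact memLp_two_sampleMean hn (hXmeas n) (hid n)
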